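/- arXiv:1411.4318 — 4 statements merged into one kernel-verified Lean document; each statement's English description precedes it below -/
import Mathlib

section
/- Let f : [0,ρ_c] → ℝ be continuous and strictly increasing, and let f̂ be its concave envelope f̂(ρ) = inf_{v ≥ 0}(ρv + f*(v)) with f*(v) = sup_{ρ∈[0,ρ_c]}(f(ρ) − vρ). Then for every ρ < ρ_c, f̂(ρ) < f̂(ρ_c) = f(ρ_c). -/
/-- For a continuous strictly increasing `f` on `[0,ρ_c]`, the concave envelope
`f̂(ρ) = inf_{v≥0}(ρv + f*(v))`, where `f*(v) = sup_{ρ'∈[0,ρ_c]}(f(ρ') - vρ')`,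
satisfies `f̂(ρ) < f̂(ρ_c) = f(ρ_c)` for every `ρ ∈ [0,ρ_c)`. -/
theorem concave_envelope_lt_at_subcritical (ρc : ℝ) (hρc : 0 < ρc) (f : ℝ → ℝ)
    (hcont : ContinuousOn f (Set.Icc 0 ρc)) (hmono : StrictMonoOn f (Set.Icc 0 ρc)) :
    let fstar : ℝ → ℝ := fun v => sSup ((fun ρ' => f ρ' - v * ρ') '' Set.Icc 0 ρc)
    let fhat : ℝ → ℝ := fun ρ => sInf ((fun v => ρ * v + fstar v) '' Set.Ici 0)
    ∀ ρ ∈ Set.Ico (0 : ℝ) ρc, fhat ρ < fhat ρc ∧ fhat ρc = f ρc := by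
  intro fstar fhat ρ hρ
  obtain ⟨hρ0, hρlt⟩ := hρ
  have hρle : ρ ≤ ρc := le_of_lt hρlt
  have hne : (Set.Icc (0:ℝ) ρc).Nonempty := ⟨0, le_refl 0, le_of_lt hρc⟩
  have hρc_mem : ρc ∈ Set.Icc (0:ℝ) ρc := ⟨le_of_lt hρc, le_refl ρc⟩
  have h0_mem : (0:ℝ) ∈ Set.Icc (0:ℝ) ρc := ⟨le_refl 0, le_of_lt hρc⟩
  have hbdd : ∀ v : ℝ, BddAbove ((fun ρ' => f ρ' - v * ρ') '' Set.Icc 0 ρc) := by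
    intro v
    exact (isCompact_Icc.image_of_continuousOn
      (hcont.sub ((continuous_const.mul continuous_id).continuousOn))).bddAbove
  have hfstar_ge : ∀ v : ℝ, ∀ x ∈ Set.Icc (0:ℝ) ρc, f x - v * x ≤ fstar v := by
    intro v x hx
    exact le_csSup (hbdd v) ⟨x, hx, rfl⟩
  have hfstar_le : ∀ v B : ℝ, (∀ x ∈ Set.Icc (0:ℝ) ρc, f x - v * x ≤ B) → fstar v ≤ B := by
    intro v B hB
    exact csSup_le (hne.image _) (by rintro y ⟨x, hx, rfl⟩; exact hB x hx)
  have hmono' := hmono.monotoneOn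
  have hfstar0 : fstar 0 = f ρc := by
    apply le_antisymm
    · exact hfstar_le 0 _ (fun x hx => by
        simpa using (hmono' hx hρc_mem hx.2))
    · simpa using hfstar_ge 0 ρc hρc_mem
  -- bounded below for fhat sets
  have hbddb : ∀ r, 0 ≤ r → BddBelow ((fun v => r * v + fstar v) '' Set.Ici 0) := by
    intro r hr
    refine ⟨f 0, ?_⟩
    rintro y ⟨v, hv, rfl⟩
    have h1 : f 0 ≤ fstar v := by simpa using hfstar_ge v 0 h0_mem
    have h2 : 0 ≤ r * v := mul_nonneg hr hv
    show f 0 ≤ r * v + fstar v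
    linarith
  have hfhat_le : ∀ r, 0 ≤ r → ∀ v, 0 ≤ v → fhat r ≤ r * v + fstar v := by
    intro r hr v hv
    exact csInf_le (hbddb r hr) ⟨v, hv, rfl⟩
  -- fhat ρc = f ρc
  have hfhatρc : fhat ρc = f ρc := by
    apply le_antisymm
    · have := hfhat_le ρc (le_of_lt hρc) 0 (le_refl 0)
      simpa [hfstar0] using this
    · apply le_csInf (Set.nonempty_Ici.image _)
      rintro y ⟨v, hv, rfl⟩
      have h1 : f ρc - v * ρc ≤ fstar v := hfstar_ge v ρc hρc_mem
      have hv' : 0 ≤ v := hv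
      show f ρc ≤ ρc * v + fstar v
      nlinarith
  refine ⟨?_, hfhatρc⟩
  rw [hfhatρc]
  -- strict inequality via midpoint and small positive slope
  set m : ℝ := (ρ + ρc) / 2 with hm_def
  have hρm : ρ < m := by simp only [hm_def]; linarith
  have hmρc : m < ρc := by simp only [hm_def]; linarith
  have hm_mem : m ∈ Set.Icc (0:ℝ) ρc := ⟨by simp only [hm_def]; linarith, le_of_lt hmρc⟩
  have hd : f m < f ρc := hmono hm_mem hρc_mem hmρc
  set d : ℝ := f ρc - f m with hd_def
  have hdpos : 0 < d := by simp only [hd_def]; linarith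
  set v0 : ℝ := d / (2 * (ρ + 1)) with hv0_def
  have hρ1 : (0:ℝ) < ρ + 1 := by linarith
  have hv0pos : 0 < v0 := by
    apply div_pos hdpos; linarith
  have hkey : (ρ + 1) * v0 = d / 2 := by
    rw [hv0_def]; field_simp
  have hfstarv0 : fstar v0 ≤ max (f m) (f ρc - v0 * m) := by
    apply hfstar_le
    intro x hx
    rcases le_or_gt x m with hxm | hxm
    · apply le_max_of_le_left
      have h1 : f x ≤ f m := hmono' hx hm_mem hxm
      have h2 : 0 ≤ v0 * x := mul_nonneg (le_of_lt hv0pos) hx.1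
      linarith
    · apply le_max_of_le_right
      have h1 : f x ≤ f ρc := hmono' hx hρc_mem hx.2
      have h2 : v0 * m ≤ v0 * x := mul_le_mul_of_nonneg_left (le_of_lt hxm) (le_of_lt hv0pos)
      linarith
  have hle : fhat ρ ≤ ρ * v0 + fstar v0 := hfhat_le ρ hρ0 v0 (le_of_lt hv0pos)
  have hmax : ρ * v0 + max (f m) (f ρc - v0 * m) < f ρc := by
    have hρv0 : ρ * v0 < d / 2 := by nlinarith
    rcases max_cases (f m) (f ρc - v0 * m) with ⟨heq, _⟩ | ⟨heq, _⟩ <;> rw [heq]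
    · simp only [hd_def] at hρv0; linarith
    · nlinarith [mul_pos hv0pos (sub_pos.mpr hρm)]
  linarith
end

section
/- Let R̄ : [0,c] → [0,∞) be continuous and strictly increasing, p ∈ (1/2,1], q := 1−p, v_0 := (p−q) inf_{λ∈[0,c)} (c−λ)/(R̄(c)−R̄(λ)), λ_0 the smallest minimizer (λ_0 = c if the infimum is attained only in the limit λ → c), and λ⁻(v) the smallest maximizer of λ ↦ (p−q)λ − vR̄(λ) on [0,c]. If (v_n) is a decreasing sequence with v_n ↓ v_0 and λ⁻(v_n) converges, then lim_n λ⁻(v_n) = λ_0. -/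
open Filter

/-- `a` is the smallest maximizer of `F` over `s`. -/
def IsSmallestMaximizer (F : ℝ → ℝ) (s : Set ℝ) (a : ℝ) : Prop :=
  a ∈ s ∧ (∀ x ∈ s, F x ≤ F a) ∧ ∀ b ∈ s, (∀ x ∈ s, F x ≤ F b) → a ≤ b

/-- `a` is the smallest minimizer of `F` over `s`. -/
def IsSmallestMinimizer (F : ℝ → ℝ) (s : Set ℝ) (a : ℝ) : Prop :=
  a ∈ s ∧ (∀ x ∈ s, F a ≤ F x) ∧ ∀ b ∈ s, (∀ x ∈ s, F b ≤ F x) → a ≤ b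

/-- If `(v_n)` is a decreasing sequence with `v_n ↓ v_0` and the smallest maximizers
`λ⁻(v_n)` of `λ ↦ (p-q)λ - v_n R̄(λ)` on `[0,c]` converge, then their limit is `λ_0`
(the smallest minimizer of `λ ↦ (c-λ)/(R̄(c)-R̄(λ))` over `[0,c)`, or `c` when the
infimum is attained only in the limit `λ → c`). -/
theorem smallest_maximizer_tendsto_lambda0 (c p : ℝ) (hc : c ∈ Set.Ioo (0 : ℝ) 1)
    (hp : p ∈ Set.Ioc (1 / 2 : ℝ) 1) (Rbar : ℝ → ℝ)
    (hcont : ContinuousOn Rbar (Set.Icc 0 c)) (hmono : StrictMonoOn Rbar (Set.Icc 0 c))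
    (lam0 : ℝ)
    (hlam0 : IsSmallestMinimizer (fun lam => (c - lam) / (Rbar c - Rbar lam))
        (Set.Ico 0 c) lam0 ∨
      ((¬ ∃ lam ∈ Set.Ico (0 : ℝ) c, ∀ μ ∈ Set.Ico (0 : ℝ) c,
          (c - lam) / (Rbar c - Rbar lam) ≤ (c - μ) / (Rbar c - Rbar μ)) ∧ lam0 = c))
    (v : ℕ → ℝ) (hvanti : StrictAnti v)
    (hvlim : Tendsto v atTop
      (nhds ((p - (1 - p)) *
        sInf ((fun lam => (c - lam) / (Rbar c - Rbar lam)) '' Set.Ico 0 c))))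
    (hvgt : ∀ n, (p - (1 - p)) *
        sInf ((fun lam => (c - lam) / (Rbar c - Rbar lam)) '' Set.Ico 0 c) < v n)
    (ln : ℕ → ℝ)
    (hln : ∀ n, IsSmallestMaximizer
      (fun lam => (p - (1 - p)) * lam - v n * Rbar lam) (Set.Icc 0 c) (ln n))
    (L : ℝ) (hL : Tendsto ln atTop (nhds L)) :
    L = lam0 := by
  obtain ⟨hc0, hc1⟩ := hc
  obtain ⟨hp2, hp1⟩ := hp
  set g : ℝ → ℝ := fun lam => (c - lam) / (Rbar c - Rbar lam) with hg
  set m : ℝ := sInf (g '' Set.Ico 0 c) with hm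
  set pq : ℝ := p - (1 - p) with hpq
  have hpq0 : (0:ℝ) < pq := by rw [hpq]; linarith
  have hcIcc : c ∈ Set.Icc (0:ℝ) c := ⟨le_of_lt hc0, le_refl c⟩
  have hD : ∀ μ ∈ Set.Ico (0:ℝ) c, 0 < Rbar c - Rbar μ := fun μ hμ =>
    sub_pos.2 (hmono ⟨hμ.1, le_of_lt hμ.2⟩ hcIcc hμ.2)
  have hgnn : ∀ x ∈ g '' Set.Ico (0:ℝ) c, (0:ℝ) ≤ x := by
    rintro x ⟨μ, hμ, rfl⟩
    exact div_nonneg (by linarith [hμ.2]) (le_of_lt (hD μ hμ))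
  have hbdd : BddBelow (g '' Set.Ico (0:ℝ) c) := ⟨0, hgnn⟩
  have hne : (g '' Set.Ico (0:ℝ) c).Nonempty := ⟨g 0, ⟨0, ⟨le_refl 0, hc0⟩, rfl⟩⟩
  have hmle : ∀ μ ∈ Set.Ico (0:ℝ) c, m ≤ g μ := fun μ hμ => csInf_le hbdd ⟨μ, hμ, rfl⟩
  have hLmem : L ∈ Set.Icc (0:ℝ) c :=
    isClosed_Icc.mem_of_tendsto hL (Filter.Eventually.of_forall fun n => (hln n).1)
  have hRlim : Tendsto (fun n => Rbar (ln n)) atTop (nhds (Rbar L)) := by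
    have h1 : Tendsto ln atTop (nhdsWithin L (Set.Icc 0 c)) :=
      tendsto_nhdsWithin_of_tendsto_nhds_of_eventually_within _ hL
        (Filter.Eventually.of_forall fun n => (hln n).1)
    exact ((hcont L hLmem).tendsto).comp h1
  -- L is a maximizer of the limiting objective
  have hFmax : ∀ μ ∈ Set.Icc (0:ℝ) c,
      pq * μ - (pq * m) * Rbar μ ≤ pq * L - (pq * m) * Rbar L := by
    intro μ hμ
    have h1 : ∀ n, pq * μ - v n * Rbar μ ≤ pq * ln n - v n * Rbar (ln n) :=
      fun n => (hln n).2.1 μ hμ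
    have h2 : Tendsto (fun n => pq * ln n - v n * Rbar (ln n)) atTop
        (nhds (pq * L - (pq * m) * Rbar L)) :=
      (tendsto_const_nhds.mul hL).sub (hvlim.mul hRlim)
    have h3 : Tendsto (fun n => pq * μ - v n * Rbar μ) atTop
        (nhds (pq * μ - (pq * m) * Rbar μ)) :=
      tendsto_const_nhds.sub (hvlim.mul tendsto_const_nhds)
    exact le_of_tendsto_of_tendsto' h3 h2 h1
  -- If L < c then L is a minimizer of g
  have hLmin : L < c → ∀ μ ∈ Set.Ico (0:ℝ) c, g L ≤ g μ := by
    intro hLc μ hμ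
    have hLIco : L ∈ Set.Ico (0:ℝ) c := ⟨hLmem.1, hLc⟩
    have hDL := hD L hLIco
    have h := hFmax c hcIcc
    have h' : pq * (c - L) ≤ pq * (m * (Rbar c - Rbar L)) := by nlinarith
    have hmL : c - L ≤ m * (Rbar c - Rbar L) := le_of_mul_le_mul_left h' hpq0
    have hgLm : g L ≤ m := by
      simp only [hg]
      rw [div_le_iff₀ hDL]
      linarith
    exact le_trans hgLm (hmle μ hμ)
  rcases hlam0 with ⟨hl0mem, hl0min, hl0small⟩ | ⟨hno, hl0c⟩
  · -- the infimum is attained, lam0 is the smallest minimizer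
    have hl0c : lam0 < c := hl0mem.2
    have hl0Icc : lam0 ∈ Set.Icc (0:ℝ) c := ⟨hl0mem.1, le_of_lt hl0c⟩
    have hDl0 := hD lam0 hl0mem
    have hgl0 : g lam0 = m := by
      refine le_antisymm (le_csInf hne ?_) (hmle lam0 hl0mem)
      rintro x ⟨μ, hμ, rfl⟩
      exact hl0min μ hμ
    have hid : m * (Rbar c - Rbar lam0) = c - lam0 := by
      rw [← hgl0]; simp only [hg]
      field_simp
    -- lam0 maximizes the limiting objective
    have hl0max : ∀ a ∈ Set.Icc (0:ℝ) c,
        pq * a - (pq * m) * Rbar a ≤ pq * lam0 - (pq * m) * Rbar lam0 := by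
      intro a ha
      have key : m * (Rbar lam0 - Rbar a) ≤ lam0 - a := by
        rcases eq_or_lt_of_le ha.2 with rfl | hac
        · linarith
        · have haIco : a ∈ Set.Ico (0:ℝ) c := ⟨ha.1, hac⟩
          have hDa := hD a haIco
          have h1 : m * (Rbar c - Rbar a) ≤ c - a := by
            have h2 := hmle a haIco
            simp only [hg] at h2
            rw [le_div_iff₀ hDa] at h2
            linarith
          linarith
      nlinarith [mul_le_mul_of_nonneg_left key (le_of_lt hpq0)]
    -- Topkis: ln n ≤ lam0 for all n
    have hln_le : ∀ n, ln n ≤ lam0 := by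
      intro n
      by_contra hgt
      push_neg at hgt
      have hlnIcc := (hln n).1
      have h1 : pq * lam0 - v n * Rbar lam0 ≤ pq * ln n - v n * Rbar (ln n) :=
        (hln n).2.1 lam0 hl0Icc
      have h2 := hl0max (ln n) hlnIcc
      have hR : Rbar lam0 < Rbar (ln n) := hmono hl0Icc hlnIcc hgt
      have hv := hvgt n
      nlinarith [mul_pos (sub_pos.2 hv) (sub_pos.2 hR)]
    have hLle : L ≤ lam0 := le_of_tendsto' hL hln_le
    have hLc : L < c := lt_of_le_of_lt hLle hl0c
    have hge : lam0 ≤ L := hl0small L ⟨hLmem.1, hLc⟩ (hLmin hLc)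
    linarith
  · -- the infimum is not attained, lam0 = c
    rw [hl0c]
    by_contra hne'
    have hLc : L < c := lt_of_le_of_ne hLmem.2 hne'
    exact hno ⟨L, ⟨hLmem.1, hLc⟩, hLmin hLc⟩
end

section
/- Condition (H) — namely that R̄(λ) − R̄(c) − (λ−c)·R̄'⁺(c) > 0 for every λ ∈ [0,c), where R̄'⁺(c) := limsup_{λ→c} (R̄(c)−R̄(λ))/(c−λ) — holds if and only if the infimum inf_{λ∈[0,c)} (c−λ)/(R̄(c)−R̄(λ)) is attained only in the limit λ → c, in which case v_0 := (p−q) inf_{λ∈[0,c)} (c−λ)/(R̄(c)−R̄(λ)) = (p−q)/R̄'⁺(c). -/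
open Filter

/-- Condition (H): `R̄(λ) - R̄(c) - (λ-c)R̄'⁺(c) > 0` for every `λ ∈ [0,c)`, where
`R̄'⁺(c)` is the limsup of the chord slopes at `c`, holds iff the infimum
`inf_{λ∈[0,c)} (c-λ)/(R̄(c)-R̄(λ))` is attained only in the limit `λ → c`; in this
case `v_0 = (p-q) inf_{λ∈[0,c)} (c-λ)/(R̄(c)-R̄(λ)) = (p-q)/R̄'⁺(c)`. -/
theorem condition_H_iff_inf_not_attained (c p : ℝ) (hc : c ∈ Set.Ioo (0 : ℝ) 1)
    (hp : p ∈ Set.Ioc (1 / 2 : ℝ) 1) (Rbar : ℝ → ℝ)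
    (hcont : ContinuousOn Rbar (Set.Icc 0 c)) (hmono : StrictMonoOn Rbar (Set.Icc 0 c))
    (D : ℝ)
    (hD : D = limsup (fun lam => (Rbar c - Rbar lam) / (c - lam))
      (nhdsWithin c (Set.Ico 0 c)))
    (hDpos : 0 < D) :
    let q := 1 - p
    let G : ℝ → ℝ := fun lam => (c - lam) / (Rbar c - Rbar lam)
    ((∀ lam ∈ Set.Ico (0 : ℝ) c, Rbar lam - Rbar c - (lam - c) * D > 0) ↔
      ¬ ∃ lam ∈ Set.Ico (0 : ℝ) c, ∀ μ ∈ Set.Ico (0 : ℝ) c, G lam ≤ G μ) ∧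
    ((∀ lam ∈ Set.Ico (0 : ℝ) c, Rbar lam - Rbar c - (lam - c) * D > 0) →
      (p - q) * sInf (G '' Set.Ico 0 c) = (p - q) / D) := by
  intro q G
  obtain ⟨hc0, hc1⟩ := hc
  set S : ℝ → ℝ := fun lam => (Rbar c - Rbar lam) / (c - lam) with hS
  set F := nhdsWithin c (Set.Ico (0:ℝ) c) with hF
  have hcIcc : c ∈ Set.Icc (0:ℝ) c := ⟨hc0.le, le_refl c⟩
  have hFne : F.NeBot := by
    rw [hF, ← mem_closure_iff_nhdsWithin_neBot, closure_Ico hc0.ne]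
    exact hcIcc
  have hpos : ∀ lam ∈ Set.Ico (0:ℝ) c, 0 < Rbar c - Rbar lam := by
    intro lam hlam
    have := hmono ⟨hlam.1, hlam.2.le⟩ hcIcc hlam.2
    linarith
  have hGpos : ∀ lam ∈ Set.Ico (0:ℝ) c, 0 < G lam := by
    intro lam hlam
    exact div_pos (by linarith [hlam.2]) (hpos lam hlam)
  have hne : (G '' Set.Ico (0:ℝ) c).Nonempty :=
    ⟨G 0, Set.mem_image_of_mem G ⟨le_refl 0, hc0⟩⟩
  have hbdd : BddBelow (G '' Set.Ico (0:ℝ) c) := by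
    refine ⟨0, ?_⟩
    rintro x ⟨lam, hlam, rfl⟩
    exact (hGpos lam hlam).le
  set m0 := sInf (G '' Set.Ico (0:ℝ) c) with hm0
  have hm0le : ∀ lam ∈ Set.Ico (0:ℝ) c, m0 ≤ G lam := by
    intro lam hlam
    exact csInf_le hbdd (Set.mem_image_of_mem G hlam)
  have hm0nonneg : 0 ≤ m0 := by
    refine le_csInf hne ?_
    rintro x ⟨lam, hlam, rfl⟩
    exact (hGpos lam hlam).le
  -- equivalence of condition H pointwise
  have hHiff : ∀ lam ∈ Set.Ico (0:ℝ) c,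
      (Rbar lam - Rbar c - (lam - c) * D > 0 ↔ 1 / D < G lam) := by
    intro lam hlam
    have h1 := hpos lam hlam
    have h2 : (0:ℝ) < c - lam := by linarith [hlam.2]
    show _ ↔ 1 / D < (c - lam) / (Rbar c - Rbar lam)
    rw [div_lt_div_iff₀ hDpos h1]
    constructor <;> intro h <;> nlinarith
  -- S positive eventually
  have hSev : ∀ᶠ lam in F, lam ∈ Set.Ico (0:ℝ) c := eventually_mem_nhdsWithin
  have hScob : F.IsCoboundedUnder (· ≤ ·) S := by
    refine Filter.IsBoundedUnder.isCoboundedUnder_flip ⟨0, ?_⟩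
    rw [Filter.eventually_map]
    refine hSev.mono ?_
    intro lam hlam
    have h1 := hpos lam hlam
    have h2 : (0:ℝ) < c - lam := by linarith [hlam.2]
    exact (div_pos h1 h2).le
  have hSbdd : F.IsBoundedUnder (· ≤ ·) S := by
    by_contra h
    have hempty : {a : ℝ | ∀ᶠ x in Filter.map S F, x ≤ a} = ∅ := by
      ext a
      simp only [Set.mem_setOf_eq, Set.mem_empty_iff_false, iff_false]
      intro ha
      exact h ⟨a, ha⟩
    have : D = 0 := by
      rw [hD, Filter.limsup, Filter.limsSup, hempty, Real.sInf_empty]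
    linarith
  have hDlimsup : D = limsup S F := hD
  -- Fact A: for every y > 1/D there is a point with G < y
  have factA : ∀ y : ℝ, 1 / D < y → ∃ lam ∈ Set.Ico (0:ℝ) c, G lam < y := by
    intro y hy
    have hy0 : 0 < y := lt_trans (div_pos one_pos hDpos) hy
    have hyD : 1 / y < D := by
      rw [div_lt_iff₀ hy0]
      rw [div_lt_iff₀ hDpos] at hy
      linarith [mul_comm D y]
    have hfreq : ∃ᶠ lam in F, 1 / y < S lam := by
      apply frequently_lt_of_lt_limsup hScob
      rw [← hDlimsup]; exact hyD
    obtain ⟨lam, h1, hlam⟩ := (hfreq.and_eventually hSev).exists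
    refine ⟨lam, hlam, ?_⟩
    have hd := hpos lam hlam
    have h2 : (0:ℝ) < c - lam := by linarith [hlam.2]
    show (c - lam) / (Rbar c - Rbar lam) < y
    rw [div_lt_iff₀ hd]
    rw [div_lt_div_iff₀ hy0 h2] at h1
    nlinarith
  -- inf ≤ 1/D
  have hInfLe : m0 ≤ 1 / D := by
    by_contra h
    push_neg at h
    obtain ⟨lam, hlam, hGlam⟩ := factA m0 h
    exact absurd (hm0le lam hlam) (not_le.mpr hGlam)
  -- Fact B: for every y < 1/D, eventually G > y near c
  have factB : ∀ y : ℝ, 0 < y → y < 1 / D →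
      ∃ δ > 0, ∀ lam ∈ Set.Ico (0:ℝ) c, c - δ < lam → y < G lam := by
    intro y hy0 hy
    have hyD : D < 1 / y := by
      rw [lt_div_iff₀ hy0]
      rw [lt_div_iff₀ hDpos] at hy
      linarith [mul_comm D y]
    have hev : ∀ᶠ lam in F, S lam < 1 / y := by
      apply eventually_lt_of_limsup_lt _ hSbdd
      rw [← hDlimsup]; exact hyD
    rw [hF, eventually_nhdsWithin_iff, Metric.eventually_nhds_iff] at hev
    obtain ⟨δ, hδ, hball⟩ := hev
    refine ⟨δ, hδ, ?_⟩
    intro lam hlam hclose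
    have hdist : dist lam c < δ := by
      rw [Real.dist_eq, abs_lt]
      constructor <;> [linarith; linarith [hlam.2]]
    have hSlam : S lam < 1 / y := hball hdist hlam
    have hd := hpos lam hlam
    have h2 : (0:ℝ) < c - lam := by linarith [hlam.2]
    show y < (c - lam) / (Rbar c - Rbar lam)
    rw [lt_div_iff₀ hd]
    rw [hS] at hSlam
    simp only at hSlam
    rw [div_lt_div_iff₀ h2 hy0] at hSlam
    nlinarith
  -- if inf is not attained-at-1/D i.e. exists lam with G lam ≤ 1/D, then minimizer exists
  have hMinExists : ∀ lam0 ∈ Set.Ico (0:ℝ) c, G lam0 ≤ 1 / D →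
      ∃ lam ∈ Set.Ico (0:ℝ) c, ∀ μ ∈ Set.Ico (0:ℝ) c, G lam ≤ G μ := by
    intro lam0 hlam0 hle
    rcases le_or_gt (G lam0) m0 with hcase | hcase
    · exact ⟨lam0, hlam0, fun μ hμ => le_trans hcase (hm0le μ hμ)⟩
    · -- m0 < G lam0 ≤ 1/D, so m0 < 1/D
      have hm0lt : m0 < 1 / D := lt_of_lt_of_le hcase hle
      obtain ⟨y, hy1, hy2⟩ := exists_between hm0lt
      have hy0 : 0 < y := lt_of_le_of_lt hm0nonneg hy1
      obtain ⟨δ, hδ, htail⟩ := factB y hy0 hy2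
      obtain ⟨x1, hx1mem, hx1lt⟩ := exists_lt_of_csInf_lt hne hy1
      obtain ⟨lam1, hlam1, rfl⟩ := hx1mem
      have hlam1le : lam1 ≤ c - δ := by
        by_contra h
        push_neg at h
        exact absurd (htail lam1 hlam1 h) (not_lt.mpr hx1lt.le)
      set K := Set.Icc (0:ℝ) (c - δ) with hK
      have hKsub : K ⊆ Set.Ico (0:ℝ) c := by
        intro x hx
        exact ⟨hx.1, lt_of_le_of_lt hx.2 (by linarith)⟩
      have hGcont : ContinuousOn G K := by
        apply ContinuousOn.div
        · exact (continuousOn_const.sub continuousOn_id)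
        · exact continuousOn_const.sub
            (hcont.mono (fun x hx => ⟨(hKsub hx).1, (hKsub hx).2.le⟩))
        · intro x hx
          exact (hpos x (hKsub hx)).ne'
      have hKcpt : IsCompact K := isCompact_Icc
      obtain ⟨lam2, hlam2K, hlam2min⟩ :=
        hKcpt.exists_isMinOn ⟨lam1, hlam1.1, hlam1le⟩ hGcont
      refine ⟨lam2, hKsub hlam2K, ?_⟩
      intro μ hμ
      rcases le_or_gt μ (c - δ) with hμc | hμc
      · exact hlam2min ⟨hμ.1, hμc⟩
      · have h1 : G lam2 ≤ G lam1 := hlam2min ⟨hlam1.1, hlam1le⟩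
        have h2 : y < G μ := htail μ hμ hμc
        linarith
  constructor
  · constructor
    · rintro hH ⟨lam0, hlam0, hmin⟩
      have h1 : 1 / D < G lam0 := (hHiff lam0 hlam0).mp (hH lam0 hlam0)
      obtain ⟨μ, hμ, hGμ⟩ := factA (G lam0) h1
      exact absurd (hmin μ hμ) (not_le.mpr hGμ)
    · intro hNoMin lam hlam
      rw [hHiff lam hlam]
      by_contra hle
      push_neg at hle
      exact hNoMin (hMinExists lam hlam hle)
  · intro hH
    have h1 : 1 / D ≤ m0 := by
      refine le_csInf hne ?_
      rintro x ⟨lam, hlam, rfl⟩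
      exact ((hHiff lam hlam).mp (hH lam hlam)).le
    have heq : m0 = 1 / D := le_antisymm hInfLe h1
    rw [heq, mul_one_div]
end

section
/- Let ρ_c ∈ (0,∞), and for n ≥ 0 let δ_n := x_{n+1} − x_n where (x_n) is a decreasing sequence of negative integers with x_0 = 0 and lim x_n/δ_n = 0. Define y_n := ⌊ρ_c δ_n⌋. Then lim_{n→∞} (1/|x_n|) Σ_{i=0}^{n−1} y_i = ρ_c. -/
/-!
Writing `S_n = Σ_{i<n} ⌊ρ_c δ_i⌋`, each floor loses less than one particle, and the gaps
telescope to `|x_n|`, so `|S_n - ρ_c |x_n|| ≤ n`. It remains to see that `n / |x_n| → 0`: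
with `a_n = |x_n| ≥ n`, one has `(n + 1) / a_{n+1} ≤ (a_n + 1) / δ_n ≤ 2 a_n / δ_n → 0`.
-/

open Filter Topology Finset

theorem abs_sum_floor_sub_sum_le {ι : Type*} (s : Finset ι) (f : ι → ℝ) :
    |∑ i ∈ s, (⌊f i⌋ : ℝ) - ∑ i ∈ s, f i| ≤ #s := by
  have hfract : ∑ i ∈ s, f i - ∑ i ∈ s, (⌊f i⌋ : ℝ) = ∑ i ∈ s, Int.fract (f i) := by
    rw [← sum_sub_distrib]; rfl
  rw [abs_sub_comm, hfract, abs_of_nonneg (sum_nonneg fun i _ => Int.fract_nonneg _)]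
  simpa using sum_le_sum fun i (_ : i ∈ s) => (Int.fract_lt_one (f i)).le

theorem StrictAnti.le_sub_natCast {x : ℕ → ℤ} (hx : StrictAnti x) (n : ℕ) : x n ≤ x 0 - n := by
  induction n with
  | zero => simp
  | succ n ih =>
    have := hx (Nat.lt_add_one n)
    push_cast
    omega

theorem tendsto_natCast_div_of_tendsto_div_gap {a : ℕ → ℝ} (ha : ∀ n : ℕ, (n : ℝ) ≤ a n)
    (hgap : ∀ n, 0 < a (n + 1) - a n)
    (hlim : Tendsto (fun n => a n / (a (n + 1) - a n)) atTop (𝓝 0)) :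
    Tendsto (fun n : ℕ => (n : ℝ) / a n) atTop (𝓝 0) := by
  rw [← tendsto_add_atTop_iff_nat 1]
  refine squeeze_zero' (Eventually.of_forall fun n => ?_) ?_ (by simpa using hlim.const_mul 2)
  · exact div_nonneg n.succ.cast_nonneg ((n.succ.cast_nonneg).trans (ha _))
  filter_upwards [eventually_ge_atTop 1] with n hn
  have hn' : (1 : ℝ) ≤ n := by exact_mod_cast hn
  have han := ha n
  have hδ := hgap n
  calc ((n + 1 : ℕ) : ℝ) / a (n + 1) ≤ (a n + 1) / (a (n + 1) - a n) := by
        push_cast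
        gcongr <;> linarith
    _ ≤ 2 * (a n / (a (n + 1) - a n)) := by
        rw [← mul_div_assoc]
        gcongr
        linarith

theorem tendsto_div_of_abs_sub_mul_le_natCast {S a : ℕ → ℝ} {ρ : ℝ} (ha : ∀ n : ℕ, (n : ℝ) ≤ a n)
    (hS : ∀ n, |S n - ρ * a n| ≤ n) (hna : Tendsto (fun n : ℕ => (n : ℝ) / a n) atTop (𝓝 0)) :
    Tendsto (fun n => S n / a n) atTop (𝓝 ρ) := by
  rw [tendsto_iff_norm_sub_tendsto_zero]
  refine squeeze_zero_norm' ?_ hna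
  filter_upwards [eventually_ge_atTop 1] with n hn
  have hpos : 0 < a n := lt_of_lt_of_le (by exact_mod_cast hn) (ha n)
  rw [norm_norm, Real.norm_eq_abs, div_sub' hpos.ne', abs_div, abs_of_pos hpos]
  gcongr
  simpa [mul_comm] using hS n

theorem critical_density_of_spikes_general (ρc : ℝ)
    (x : ℕ → ℤ) (hx0 : x 0 = 0) (hanti : StrictAnti x)
    (hlim : Tendsto (fun n : ℕ => (x n : ℝ) / ((x n : ℝ) - (x (n + 1) : ℝ)))
      atTop (nhds 0)) :
    Tendsto (fun n : ℕ =>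
        (∑ i ∈ Finset.range n, (⌊ρc * ((x i : ℝ) - (x (i + 1) : ℝ))⌋ : ℝ)) /
          |(x n : ℝ)|)
      atTop (nhds ρc) := by
  obtain ⟨a, ha_def⟩ : ∃ a : ℕ → ℝ, ∀ n, a n = -(x n : ℝ) := ⟨_, fun _ => rfl⟩
  have ha : ∀ n : ℕ, (n : ℝ) ≤ a n := fun n => by
    rw [ha_def, le_neg]
    exact_mod_cast (by simpa [hx0] using hanti.le_sub_natCast n)
  have habs : ∀ n, |(x n : ℝ)| = a n := fun n => by
    rw [← abs_neg, ← ha_def, abs_of_nonneg (n.cast_nonneg.trans (ha n))]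
  have hgap : ∀ n, (x n : ℝ) - x (n + 1) = a (n + 1) - a n := fun n => by
    rw [ha_def, ha_def]; ring
  have htelescope : ∀ n, ∑ i ∈ range n, ((x i : ℝ) - x (i + 1)) = a n := fun n => by
    rw [sum_range_sub', hx0, ha_def]; simp
  have hna : Tendsto (fun n : ℕ => (n : ℝ) / a n) atTop (𝓝 0) := by
    refine tendsto_natCast_div_of_tendsto_div_gap ha (fun n => ?_) ?_
    · rw [← hgap]; exact_mod_cast sub_pos.2 (hanti (Nat.lt_add_one n))
    · rw [← neg_zero]
      refine hlim.neg.congr fun n => ?_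
      rw [← hgap, ha_def, neg_div]
  simp only [habs]
  refine tendsto_div_of_abs_sub_mul_le_natCast ha (fun n => ?_) hna
  rw [← htelescope, mul_sum]
  simpa using abs_sum_floor_sub_sum_le (range n) _

/-- Let `(x_n)` be a strictly decreasing sequence of integers with `x_0 = 0` (hence
negative for `n ≥ 1`), let `δ_n` be the gap between `x_n` and `x_{n+1}` and assume
`x_n / δ_n → 0`. Placing `y_n = ⌊ρ_c δ_n⌋` particles in the `n`-th gap, the left
density is critical: `(1/|x_n|) Σ_{i=0}^{n-1} y_i → ρ_c`. -/
theorem critical_density_of_spikes (ρc : ℝ) (hρc : 0 < ρc)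
    (x : ℕ → ℤ) (hx0 : x 0 = 0) (hanti : StrictAnti x)
    (hlim : Tendsto (fun n : ℕ => (x n : ℝ) / ((x n : ℝ) - (x (n + 1) : ℝ)))
      atTop (nhds 0)) :
    Tendsto (fun n : ℕ =>
        (∑ i ∈ Finset.range n, (⌊ρc * ((x i : ℝ) - (x (i + 1) : ℝ))⌋ : ℝ)) /
          |(x n : ℝ)|)
      atTop (nhds ρc) :=
  critical_density_of_spikes_general ρc x hx0 hanti hlim
end
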